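/- arXiv:2202.11520 — 4 statements merged into one kernel-verified Lean document; each statement's English description precedes it below -/
import Mathlib

section
/- Let A be a normal n×n complex matrix and q ≥ 0. Then for all B ∈ M_n(ℂ), ‖AB − qBA‖_F² ≤ (1 + q²)(s₁(A)² + s₂(A)²)‖B‖_F², where s₁(A) ≥ s₂(A) are the two largest singular values of A. -/
open scoped BigOperators Matrix
open Matrix

/-!
Conjugating by a unitary that diagonalizes `Aᴴ * A = A * Aᴴ` preserves the Frobenius norm, so we
may assume `Aᴴ * A = A * Aᴴ = diagonal μ`, with `μ` the squared singular values. Then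
`‖A C‖² + ‖C A‖² = ∑ (μ i + μ j) |C i j|²`, and by Cauchy–Schwarz
`‖A C - q C A‖² ≤ (1 + q²) (‖A C‖² + ‖C A‖²)`. Each weight `μ i + μ j` is at most
`S = s₁² + s₂²`, except possibly `2 μ i` for the single index `i` with `2 μ i > S`. That `μ i` is
then a simple eigenvalue, and since `A` commutes with `diagonal μ`, row and column `i` of `A`
vanish off the diagonal. The entry `C i i` then decouples and contributes only
`(1 - q)² |A i i|² |C i i|² ≤ (1 + q²) S |C i i|²`.
-/

noncomputable def frobSq {n : ℕ} (M : Matrix (Fin n) (Fin n) ℂ) : ℝ :=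
  ∑ i, ∑ j, ‖M i j‖ ^ 2

/-- The singular values of `A` (in some order): the square roots of the
eigenvalues of the Hermitian matrix `Aᴴ * A`. -/
noncomputable def sv {n : ℕ} (A : Matrix (Fin n) (Fin n) ℂ) (i : Fin n) : ℝ :=
  Real.sqrt ((Matrix.isHermitian_conjTranspose_mul_self A).eigenvalues i)

namespace Matrix

variable {m n R : Type*}

lemma re_mul_conjTranspose_apply_self [Fintype n] (X : Matrix m n ℂ) (i : m) :
    ((X * Xᴴ) i i).re = ∑ j, ‖X i j‖ ^ 2 := by
  simp only [mul_apply, conjTranspose_apply, Complex.re_sum, Complex.star_def, Complex.mul_conj',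
    ← Complex.ofReal_pow, Complex.ofReal_re]

lemma re_conjTranspose_mul_apply_self [Fintype m] (X : Matrix m n ℂ) (j : n) :
    ((Xᴴ * X) j j).re = ∑ i, ‖X i j‖ ^ 2 := by
  simpa using re_mul_conjTranspose_apply_self Xᴴ j

variable [Fintype m] {i j : m}

lemma mul_apply_self_of_row_eq_zero [Semiring R] {A : Matrix m m R}
    (hrow : ∀ k, k ≠ i → A i k = 0) (X : Matrix m m R) : (A * X) i i = A i i * X i i :=
  (mul_apply ..).trans <| Finset.sum_eq_single i (fun k _ hk => by rw [hrow k hk, zero_mul])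
    (by simp)

lemma mul_apply_self_of_col_eq_zero [Semiring R] {A : Matrix m m R}
    (hcol : ∀ k, k ≠ i → A k i = 0) (X : Matrix m m R) : (X * A) i i = X i i * A i i :=
  (mul_apply ..).trans <| Finset.sum_eq_single i (fun k _ hk => by rw [hcol k hk, mul_zero])
    (by simp)

variable [DecidableEq m]

lemma apply_eq_zero_of_mul_diagonal_eq [CommRing R] [NoZeroDivisors R] {A : Matrix m m R}
    {d : m → R} (h : A * diagonal d = diagonal d * A) (hij : d i ≠ d j) : A i j = 0 := by
  have hij' := congrFun (congrFun h i) j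
  rw [mul_diagonal, diagonal_mul] at hij'
  have : A i j * (d j - d i) = 0 := by linear_combination hij'
  exact (mul_eq_zero.mp this).resolve_right (sub_ne_zero.mpr hij.symm)

lemma mul_single_of_col_eq_zero [Semiring R] {A : Matrix m m R} (hA : ∀ k, k ≠ i → A k i = 0)
    (c : R) : A * single i i c = single i i (A i i * c) := by
  ext j k
  by_cases hj : j = i <;> by_cases hk : k = i <;> simp [hj, hk, hA, @eq_comm _ i]

lemma single_mul_of_row_eq_zero [Semiring R] {A : Matrix m m R} (hA : ∀ k, k ≠ i → A i k = 0)
    (c : R) : single i i c * A = single i i (c * A i i) := by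
  ext j k
  by_cases hj : j = i <;> by_cases hk : k = i <;> simp [hj, hk, hA, @eq_comm _ i]

lemma mul_sub_smul_single_mul_of_isolated [CommRing R] {A : Matrix m m R}
    (hcol : ∀ k, k ≠ i → A k i = 0) (hrow : ∀ k, k ≠ i → A i k = 0) (q c : R) :
    A * single i i c - q • (single i i c * A) = single i i ((1 - q) * (A i i * c)) := by
  rw [mul_single_of_col_eq_zero hcol, single_mul_of_row_eq_zero hrow, smul_single, smul_eq_mul,
    sub_eq_add_neg, single_neg, ← single_add]
  congr 1
  ring

end Matrix

lemma Complex.norm_sub_ofReal_mul_sq_le (q : ℝ) (a b : ℂ) :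
    ‖a - q * b‖ ^ 2 ≤ (1 + q ^ 2) * (‖a‖ ^ 2 + ‖b‖ ^ 2) := by
  have h : ‖a - q * b‖ ≤ ‖a‖ + |q| * ‖b‖ := by
    simpa [norm_mul, Complex.norm_real] using norm_sub_le a (q * b)
  calc ‖a - q * b‖ ^ 2 ≤ (‖a‖ + |q| * ‖b‖) ^ 2 := by gcongr
    _ ≤ (1 + q ^ 2) * (‖a‖ ^ 2 + ‖b‖ ^ 2) := by nlinarith [sq_nonneg (|q| * ‖a‖ - ‖b‖), sq_abs q]

section FrobSq

variable {n : ℕ}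

lemma frobSq_eq_re_trace (M : Matrix (Fin n) (Fin n) ℂ) : frobSq M = (trace (M * Mᴴ)).re := by
  simp only [frobSq, trace, diag, Complex.re_sum, re_mul_conjTranspose_apply_self]

lemma frobSq_conjStarAlgAut (U : unitary (Matrix (Fin n) (Fin n) ℂ))
    (M : Matrix (Fin n) (Fin n) ℂ) : frobSq (Unitary.conjStarAlgAut ℂ _ U M) = frobSq M := by
  rw [frobSq_eq_re_trace, frobSq_eq_re_trace, ← star_eq_conjTranspose, ← map_star, ← map_mul,
    Unitary.conjStarAlgAut_apply, trace_mul_cycle, ← Matrix.mul_assoc, Unitary.coe_star_mul_self,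
    Matrix.one_mul, star_eq_conjTranspose]

lemma frobSq_single (i j : Fin n) (x : ℂ) : frobSq (single i j x) = ‖x‖ ^ 2 := by
  simp [frobSq, single_apply, apply_ite, ite_and]

lemma frobSq_add_of_disjoint {X Y : Matrix (Fin n) (Fin n) ℂ}
    (h : ∀ i j, X i j = 0 ∨ Y i j = 0) : frobSq (X + Y) = frobSq X + frobSq Y := by
  simp only [frobSq, ← Finset.sum_add_distrib, Matrix.add_apply]
  refine Finset.sum_congr rfl fun i _ => Finset.sum_congr rfl fun j _ => ?_
  rcases h i j with h | h <;> simp [h]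

lemma frobSq_single_add {i j : Fin n} (x : ℂ) {Y : Matrix (Fin n) (Fin n) ℂ} (hY : Y i j = 0) :
    frobSq (single i j x + Y) = ‖x‖ ^ 2 + frobSq Y := by
  rw [frobSq_add_of_disjoint, frobSq_single]
  intro k l
  by_cases hkl : i = k ∧ j = l
  · obtain ⟨rfl, rfl⟩ := hkl
    exact .inr hY
  · exact .inl (by simp [hkl])

lemma frobSq_sub_smul_le (q : ℝ) (X Y : Matrix (Fin n) (Fin n) ℂ) :
    frobSq (X - (q : ℂ) • Y) ≤ (1 + q ^ 2) * (frobSq X + frobSq Y) := by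
  simp only [frobSq, ← Finset.sum_add_distrib, Finset.mul_sum]
  gcongr with i _ j _
  exact Complex.norm_sub_ofReal_mul_sq_le q (X i j) (Y i j)

end FrobSq

section DiagonalFrame

variable {n : ℕ} {μ : Fin n → ℝ} {A : Matrix (Fin n) (Fin n) ℂ}

lemma sum_norm_sq_col_eq (h : Aᴴ * A = diagonal fun i => (μ i : ℂ)) (j : Fin n) :
    ∑ i, ‖A i j‖ ^ 2 = μ j := by
  rw [← re_conjTranspose_mul_apply_self, h, diagonal_apply_eq, Complex.ofReal_re]

lemma frobSq_mul_eq_of_conjTranspose_mul_self_eq_diagonal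
    (h : Aᴴ * A = diagonal fun i => (μ i : ℂ)) (X : Matrix (Fin n) (Fin n) ℂ) :
    frobSq (A * X) = ∑ i, μ i * ∑ j, ‖X i j‖ ^ 2 := by
  rw [frobSq_eq_re_trace, conjTranspose_mul, ← Matrix.mul_assoc, Matrix.mul_assoc A,
    trace_mul_cycle, h]
  simp [trace, diagonal_mul, Complex.re_sum, re_mul_conjTranspose_apply_self]

lemma frobSq_mul_eq_of_mul_conjTranspose_self_eq_diagonal
    (h : A * Aᴴ = diagonal fun i => (μ i : ℂ)) (X : Matrix (Fin n) (Fin n) ℂ) :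
    frobSq (X * A) = ∑ j, μ j * ∑ i, ‖X i j‖ ^ 2 := by
  rw [frobSq_eq_re_trace, conjTranspose_mul, ← Matrix.mul_assoc, Matrix.mul_assoc X,
    h, trace_mul_comm, ← Matrix.mul_assoc]
  simp [trace, Complex.re_sum, re_conjTranspose_mul_apply_self, mul_comm]

variable (h₁ : Aᴴ * A = diagonal fun i => (μ i : ℂ)) (h₂ : A * Aᴴ = diagonal fun i => (μ i : ℂ))
include h₁ h₂

lemma frobSq_mul_add_frobSq_mul_eq (C : Matrix (Fin n) (Fin n) ℂ) :
    frobSq (A * C) + frobSq (C * A) = ∑ i, ∑ j, (μ i + μ j) * ‖C i j‖ ^ 2 := by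
  rw [frobSq_mul_eq_of_conjTranspose_mul_self_eq_diagonal h₁,
    frobSq_mul_eq_of_mul_conjTranspose_self_eq_diagonal h₂]
  simp only [Finset.mul_sum, add_mul, Finset.sum_add_distrib]
  exact congrArg _ Finset.sum_comm

lemma apply_eq_zero_of_diagonal_ne {i j : Fin n} (hij : μ i ≠ μ j) : A i j = 0 := by
  have hcomm : A * (Aᴴ * A) = (A * Aᴴ) * A := (Matrix.mul_assoc _ _ _).symm
  rw [h₁, h₂] at hcomm
  exact apply_eq_zero_of_mul_diagonal_eq hcomm (by exact_mod_cast hij)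

lemma frobSq_mul_sub_smul_mul_le_of_support (q : ℝ) {S : ℝ} {C : Matrix (Fin n) (Fin n) ℂ}
    (hC : ∀ i j, C i j ≠ 0 → μ i + μ j ≤ S) :
    frobSq (A * C - (q : ℂ) • (C * A)) ≤ (1 + q ^ 2) * S * frobSq C := by
  have hweights : ∑ i, ∑ j, (μ i + μ j) * ‖C i j‖ ^ 2 ≤ S * frobSq C := by
    simp only [frobSq, Finset.mul_sum]
    refine Finset.sum_le_sum fun i _ => Finset.sum_le_sum fun j _ => ?_
    by_cases hij : C i j = 0
    · simp [hij]
    · exact mul_le_mul_of_nonneg_right (hC i j hij) (sq_nonneg _)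
  calc frobSq (A * C - (q : ℂ) • (C * A)) ≤ (1 + q ^ 2) * (frobSq (A * C) + frobSq (C * A)) :=
        frobSq_sub_smul_le q _ _
    _ ≤ (1 + q ^ 2) * (S * frobSq C) := by
        rw [frobSq_mul_add_frobSq_mul_eq h₁ h₂]; gcongr
    _ = (1 + q ^ 2) * S * frobSq C := by ring

lemma frobSq_mul_sub_smul_mul_le_of_isolated {q : ℝ} (hq : 0 ≤ q) {S : ℝ} {i : Fin n}
    (hcol : ∀ k, k ≠ i → A k i = 0) (hrow : ∀ k, k ≠ i → A i k = 0) (hμi : μ i ≤ S)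
    (hS : ∀ j k, (j, k) ≠ (i, i) → μ j + μ k ≤ S) (C : Matrix (Fin n) (Fin n) ℂ) :
    frobSq (A * C - (q : ℂ) • (C * A)) ≤ (1 + q ^ 2) * S * frobSq C := by
  set c := C i i
  set C₁ := C - single i i c
  have hC₁ : C₁ i i = 0 := by simp [C₁, c]
  have hC : C = single i i c + C₁ := by simp [C₁]
  have hT : A * C - (q : ℂ) • (C * A) =
      single i i ((1 - q) * (A i i * c)) + (A * C₁ - (q : ℂ) • (C₁ * A)) := by
    rw [← mul_sub_smul_single_mul_of_isolated hcol hrow]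
    conv_lhs => rw [hC]
    simp only [Matrix.mul_add, Matrix.add_mul, smul_add]
    abel
  have hT₁ : (A * C₁ - (q : ℂ) • (C₁ * A)) i i = 0 := by
    simp [mul_apply_self_of_row_eq_zero hrow, mul_apply_self_of_col_eq_zero hcol, hC₁]
  have hAii : ‖A i i‖ ^ 2 ≤ μ i := by
    rw [← sum_norm_sq_col_eq h₁]
    exact Finset.single_le_sum (fun k _ => sq_nonneg ‖A k i‖) (Finset.mem_univ i)
  have hdiag : ‖(1 - q) * (A i i * c)‖ ^ 2 ≤ (1 + q ^ 2) * S * ‖c‖ ^ 2 := by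
    have hq' : (1 - q) ^ 2 ≤ 1 + q ^ 2 := by nlinarith
    calc ‖(1 - q) * (A i i * c)‖ ^ 2 = (1 - q) ^ 2 * (‖A i i‖ ^ 2 * ‖c‖ ^ 2) := by
          rw [← Complex.ofReal_one, ← Complex.ofReal_sub, norm_mul, norm_mul, Complex.norm_real,
            Real.norm_eq_abs, mul_pow, mul_pow, sq_abs]
      _ ≤ (1 + q ^ 2) * (S * ‖c‖ ^ 2) := by gcongr; exact hAii.trans hμi
      _ = (1 + q ^ 2) * S * ‖c‖ ^ 2 := by ring
  have hrest := frobSq_mul_sub_smul_mul_le_of_support h₁ h₂ q (S := S) (C := C₁)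
    fun j k hjk => hS j k (by rintro ⟨rfl, rfl⟩; exact hjk hC₁)
  rw [hT, frobSq_single_add _ hT₁]
  conv_rhs => rw [hC, frobSq_single_add _ hC₁]
  linarith

theorem frobSq_mul_sub_smul_mul_le [Nontrivial (Fin n)] {q : ℝ} (hq : 0 ≤ q) {S : ℝ}
    (hS : ∀ i j, i ≠ j → μ i + μ j ≤ S) (C : Matrix (Fin n) (Fin n) ℂ) :
    frobSq (A * C - (q : ℂ) • (C * A)) ≤ (1 + q ^ 2) * S * frobSq C := by
  have hμ (i : Fin n) : 0 ≤ μ i := by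
    rw [← sum_norm_sq_col_eq h₁]; positivity
  by_cases hsmall : ∀ i, μ i + μ i ≤ S
  · refine frobSq_mul_sub_smul_mul_le_of_support h₁ h₂ q fun j k _ => ?_
    rcases eq_or_ne j k with rfl | hjk
    exacts [hsmall j, hS j k hjk]
  push Not at hsmall
  obtain ⟨i, hi⟩ := hsmall
  have hlt (k : Fin n) (hk : k ≠ i) : μ k < μ i := by linarith [hS k i hk]
  obtain ⟨j, hj⟩ := exists_ne i
  refine frobSq_mul_sub_smul_mul_le_of_isolated h₁ h₂ hq
    (fun k hk => apply_eq_zero_of_diagonal_ne h₁ h₂ (hlt k hk).ne)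
    (fun k hk => apply_eq_zero_of_diagonal_ne h₁ h₂ (hlt k hk).ne')
    (by linarith [hS i j hj.symm, hμ j]) (fun k l hkl => ?_) C
  rcases eq_or_ne k l with rfl | hne
  · have hk : k ≠ i := by rintro rfl; exact hkl rfl
    linarith [hS k i hk, hlt k hk]
  · exact hS k l hne

end DiagonalFrame

lemma sv_sq {n : ℕ} (A : Matrix (Fin n) (Fin n) ℂ) (i : Fin n) :
    sv A i ^ 2 = (isHermitian_conjTranspose_mul_self A).eigenvalues i :=
  Real.sq_sqrt (eigenvalues_conjTranspose_mul_self_nonneg A i)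

/-- The sum of the squares of the two largest singular values of `A`, expressed as
the maximum of `sv A i ^ 2 + sv A j ^ 2` over pairs of distinct indices. -/
theorem stmt_2 {n : ℕ} (hn : 2 ≤ n) (q : ℝ) (hq : 0 ≤ q)
    (A : Matrix (Fin n) (Fin n) ℂ) (hA : A * Aᴴ = Aᴴ * A)
    (B : Matrix (Fin n) (Fin n) ℂ) :
    frobSq (A * B - (q : ℂ) • (B * A)) ≤
      (1 + q ^ 2) *
        ((Finset.univ.filter fun p : Fin n × Fin n => p.1 ≠ p.2).sup'
          (⟨(⟨0, by omega⟩, ⟨1, by omega⟩), by simp [Fin.ext_iff]⟩)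
          fun p => sv A p.1 ^ 2 + sv A p.2 ^ 2) *
        frobSq B := by
  have : Nontrivial (Fin n) := Fin.nontrivial_iff_two_le.mpr hn
  set hH := isHermitian_conjTranspose_mul_self A
  set φ := Unitary.conjStarAlgAut ℂ _ (star hH.eigenvectorUnitary)
  have hD : φ (Aᴴ * A) = diagonal fun i => (hH.eigenvalues i : ℂ) :=
    hH.conjStarAlgAut_star_eigenvectorUnitary
  have hφA : (φ A)ᴴ = φ Aᴴ := (map_star φ A).symm
  rw [← frobSq_conjStarAlgAut (star hH.eigenvectorUnitary), map_sub, map_smul, map_mul, map_mul,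
    ← frobSq_conjStarAlgAut (star hH.eigenvectorUnitary) B]
  refine frobSq_mul_sub_smul_mul_le (by rw [hφA, ← map_mul, hD])
    (by rw [hφA, ← map_mul, hA, hD]) hq (fun i j hij => ?_) (φ B)
  rw [← sv_sq, ← sv_sq]
  exact Finset.le_sup' (fun p : Fin n × Fin n => sv A p.1 ^ 2 + sv A p.2 ^ 2)
    (b := (i, j)) (by simpa using hij)
end

section
/- Fix q > 0 with q ≠ 1 and let f(t) = (t²(1+q²) + 2t(1+q)(1+q³) + (1−q)²(1+q⁴))/(t + q² + 1)² for t ≥ 0. Then f attains its maximum on [0,∞) at t_max = (3q⁴ + 2q² + 3)/(1−q)², and f(t_max) > 1 + q². -/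
/-!
Substituting `x = (t + q² + 1)⁻¹` turns `f` into the concave quadratic
`(1 + q²) + 2q(1 - q)² x - 2q P x²` with `P = 2 - q + 2q² - q³ + 2q⁴ > 0`.
Its vertex `x = (1 - q)² / (2P)` corresponds to `t = t_max`, and the value there exceeds
`1 + q²` by `q (1 - q)⁴ / (2P)`, which is positive because `q ≠ 1`.
-/

namespace QuarticRatio

noncomputable def P (q : ℝ) : ℝ := 2 - q + 2 * q ^ 2 - q ^ 3 + 2 * q ^ 4

lemma P_pos (q : ℝ) : 0 < P q := by
  unfold P
  nlinarith [sq_nonneg (1 - q), sq_nonneg (q - q ^ 2), sq_nonneg q, sq_nonneg (q ^ 2)]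

lemma ratio_eq_vertex_form (q : ℝ) {t : ℝ} (ht : t + q ^ 2 + 1 ≠ 0) :
    (t ^ 2 * (1 + q ^ 2) + 2 * t * (1 + q) * (1 + q ^ 3) + (1 - q) ^ 2 * (1 + q ^ 4)) /
        (t + q ^ 2 + 1) ^ 2 =
      1 + q ^ 2 + q * (1 - q) ^ 4 / (2 * P q) -
        2 * q * P q * ((t + q ^ 2 + 1)⁻¹ - (1 - q) ^ 2 / (2 * P q)) ^ 2 := by
  have hP := (P_pos q).ne'
  field_simp
  unfold P
  ring

lemma inv_tmax_add {q : ℝ} (hq1 : q ≠ 1) :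
    ((3 * q ^ 4 + 2 * q ^ 2 + 3) / (1 - q) ^ 2 + q ^ 2 + 1)⁻¹ = (1 - q) ^ 2 / (2 * P q) := by
  have h1 : (1 - q) ^ 2 ≠ 0 := pow_ne_zero 2 (sub_ne_zero.mpr hq1.symm)
  have hP := (P_pos q).ne'
  rw [inv_eq_iff_eq_inv, inv_div, eq_div_iff h1]
  field_simp
  unfold P
  ring

end QuarticRatio

open QuarticRatio in
theorem stmt_8 (q : ℝ) (hq : 0 < q) (hq1 : q ≠ 1)
    (f : ℝ → ℝ)
    (hf : ∀ t, f t = (t ^ 2 * (1 + q ^ 2) + 2 * t * (1 + q) * (1 + q ^ 3) +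
      (1 - q) ^ 2 * (1 + q ^ 4)) / (t + q ^ 2 + 1) ^ 2)
    (tmax : ℝ) (htmax : tmax = (3 * q ^ 4 + 2 * q ^ 2 + 3) / (1 - q) ^ 2) :
    (∀ t, 0 ≤ t → f t ≤ f tmax) ∧ f tmax > 1 + q ^ 2 := by
  have hf_vertex : ∀ t, 0 ≤ t → f t = 1 + q ^ 2 + q * (1 - q) ^ 4 / (2 * P q) -
      2 * q * P q * ((t + q ^ 2 + 1)⁻¹ - (1 - q) ^ 2 / (2 * P q)) ^ 2 := fun t ht => by
    rw [hf, ratio_eq_vertex_form q (by positivity)]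
  have htmax_pos : 0 ≤ tmax := htmax ▸ by positivity
  have hf_tmax : f tmax = 1 + q ^ 2 + q * (1 - q) ^ 4 / (2 * P q) := by
    rw [hf_vertex tmax htmax_pos, htmax, inv_tmax_add hq1]
    ring
  have hP := P_pos q
  refine ⟨fun t ht => ?_, ?_⟩
  · rw [hf_vertex t ht, hf_tmax]
    have : 0 ≤ 2 * q * P q * ((t + q ^ 2 + 1)⁻¹ - (1 - q) ^ 2 / (2 * P q)) ^ 2 := by positivity
    linarith
  · have h1 : 1 - q ≠ 0 := sub_ne_zero.mpr hq1.symm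
    have : 0 < q * (1 - q) ^ 4 / (2 * P q) := by positivity
    linarith
end

section
/- For q > 0 with q ≠ 1, there exist 2×2 real matrices A and B with ‖AB − qBA‖_F² > (1 + q²)‖A‖_F²‖B‖_F². -/
open Matrix
open scoped BigOperators Matrix

noncomputable def frobSqR (M : Matrix (Fin 2) (Fin 2) ℝ) : ℝ :=
  ∑ i, ∑ j, ‖M i j‖ ^ 2

lemma key_identity (q e x1 x2 : ℝ) :
    frobSqR (!![e*x1, 1; 0, e*x2] * !![-(e*x1), 0; 1, -(e*x2)]
        - q • (!![-(e*x1), 0; 1, -(e*x2)] * !![e*x1, 1; 0, e*x2]))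
      = (1 + q^2) * frobSqR !![e*x1, 1; 0, e*x2] * frobSqR !![-(e*x1), 0; 1, -(e*x2)]
        + e^2 * (2*(q-2)*x1^2 + 2*q*(1-2*q)*x2^2 - 4*q*x1*x2)
        + e^4 * (-(2*(1+q^2)*x1^2*x2^2) - 2*q*(x1^4 + x2^4)) := by
  simp [frobSqR, Fin.sum_univ_two, Matrix.mul_apply, Real.norm_eq_abs, sq_abs]
  ring

lemma general_case (q x1 x2 : ℝ)
    (hP : 0 < 2*(q-2)*x1^2 + 2*q*(1-2*q)*x2^2 - 4*q*x1*x2) :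
    ∃ A B : Matrix (Fin 2) (Fin 2) ℝ,
      frobSqR (A * B - q • (B * A)) > (1 + q ^ 2) * frobSqR A * frobSqR B := by
  set P : ℝ := 2*(q-2)*x1^2 + 2*q*(1-2*q)*x2^2 - 4*q*x1*x2 with hPdef
  set R : ℝ := -(2*(1+q^2)*x1^2*x2^2) - 2*q*(x1^4 + x2^4) with hRdef
  have hden : (0:ℝ) < 2*(1+R^2) := by positivity
  set e : ℝ := Real.sqrt (P / (2*(1+R^2))) with hedef
  have he2 : e^2 = P / (2*(1+R^2)) := by
    rw [hedef, sq, Real.mul_self_sqrt (le_of_lt (div_pos hP hden))]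
  have he2pos : 0 < e^2 := he2 ▸ div_pos hP hden
  clear_value e
  clear_value P R
  refine ⟨!![e*x1, 1; 0, e*x2], !![-(e*x1), 0; 1, -(e*x2)], ?_⟩
  rw [key_identity]
  have hkey : 0 < e^2 * P + e^4 * R := by
    have h1 : -R ≤ (1 + R^2)/2 := by nlinarith [sq_nonneg (R+1)]
    have h2 : e^2 * (-R) ≤ P/2 := by
      rw [he2]
      rw [div_mul_eq_mul_div, div_le_div_iff₀ hden (by norm_num : (0:ℝ) < 2)]
      nlinarith [sq_nonneg (R+1), hP.le, mul_le_mul_of_nonneg_left h1 hP.le]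
    have h4 : -(P/2) ≤ e^2 * R := by linarith
    have h5 := mul_le_mul_of_nonneg_left h4 he2pos.le
    have h3 : e^4 * R = e^2 * (e^2 * R) := by ring
    have h6 : e^2 * -(P/2) = -(e^2*P)/2 := by ring
    linarith [mul_pos he2pos hP]
  rw [← hPdef, ← hRdef]
  linarith

theorem stmt_9 (q : ℝ) (hq : 0 < q) (hq1 : q ≠ 1) :
    ∃ A B : Matrix (Fin 2) (Fin 2) ℝ,
      frobSqR (A * B - q • (B * A)) > (1 + q ^ 2) * frobSqR A * frobSqR B := by
  rcases lt_or_gt_of_ne hq1 with h | h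
  · -- q < 1 : take (x1, x2) = (q, q-2), P = -4q(q-2)(q-1)^2 > 0
    apply general_case q q (q-2)
    have hne : q - 1 < 0 := by linarith
    have hsq : 0 < (q-1)*(q-1) := mul_pos_of_neg_of_neg hne hne
    have h2q : (0:ℝ) < 2 - q := by linarith
    nlinarith [mul_pos (mul_pos hq h2q) hsq]
  · -- q > 1 : take (x1, x2) = (1-2q, 1), P = 4(q-1)^2(2q-1) > 0
    apply general_case q (1-2*q) 1
    have hsq : 0 < (q-1)*(q-1) := mul_pos (by linarith) (by linarith)
    nlinarith [mul_pos hsq (show (0:ℝ) < 2*q-1 by linarith)]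
end

section
/- Let A ∈ M_n(ℂ) with tr(A) = 0 and rank(A) = 1, and q ∈ ℝ. Then for all B ∈ M_n(ℂ), ‖AB − qBA‖_F² ≤ (1 + q²)‖A‖_F²‖B‖_F². -/
/-!
A traceless rank-one matrix is `c • vecMulVec p s` with `p`, `s` unit vectors and `p ⬝ᵥ s = 0`,
i.e. `p` and `star s` orthonormal. Then
`AB - qBA = c • (vecMulVec p (s ᵥ* B) - q • vecMulVec (B *ᵥ p) s)`,
whose squared Frobenius norm is `‖s ᵥ* B‖² + q²‖B *ᵥ p‖² - 2q Re(S T)` with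
`S = p ⬝ᵥ star (B *ᵥ p)` and `T = (s ᵥ* B) ⬝ᵥ star s`.
Bessel's inequality for the pair `p`, `star s`, applied to the columns and to the rows of `B`,
gives `‖s ᵥ* B‖² + ‖star p ᵥ* B‖² ≤ ‖B‖²` and `‖B *ᵥ p‖² + ‖B *ᵥ star s‖² ≤ ‖B‖²`, while
Cauchy–Schwarz gives `|S| ≤ ‖star p ᵥ* B‖` and `|T| ≤ ‖B *ᵥ star s‖`; AM–GM then absorbs the
cross term into the two missing squares.
-/

open Matrix
open scoped BigOperators Matrix

theorem Matrix.exists_eq_vecMulVec_of_rank_eq_one {K m n : Type*} [Field K] [Fintype m]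
    [Fintype n] {A : Matrix m n K} (h : A.rank = 1) : ∃ u v, A = vecMulVec u v := by
  rw [rank_eq_finrank_span_cols] at h
  obtain ⟨w, -, hw⟩ := finrank_eq_one_iff'.mp h
  choose c hc using fun j => hw ⟨A.col j, Submodule.subset_span ⟨j, rfl⟩⟩
  refine ⟨w, c, Matrix.ext fun i j => ?_⟩
  have := congr_fun (congr_arg Subtype.val (hc j)) i
  simp only [SetLike.val_smul, Pi.smul_apply, smul_eq_mul, col_apply] at this
  rw [vecMulVec_apply, ← this, mul_comm]

section Vectors

variable {ι : Type*} [Fintype ι]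

theorem norm_dotProduct_sq_le (x y : ι → ℂ) :
    ‖x ⬝ᵥ y‖ ^ 2 ≤ (∑ i, ‖x i‖ ^ 2) * ∑ i, ‖y i‖ ^ 2 := by
  have := norm_inner_le_norm (𝕜 := ℂ) (WithLp.toLp 2 (star x)) (WithLp.toLp 2 y)
  rw [EuclideanSpace.inner_toLp_toLp, star_star, dotProduct_comm] at this
  calc ‖x ⬝ᵥ y‖ ^ 2 ≤ (‖WithLp.toLp 2 (star x)‖ * ‖WithLp.toLp 2 y‖) ^ 2 := by gcongr
    _ = _ := by simp [mul_pow, EuclideanSpace.norm_sq_eq]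

theorem norm_dotProduct_sq_add_le {x y : ι → ℂ} (hx : ∑ i, ‖x i‖ ^ 2 = 1)
    (hy : ∑ i, ‖y i‖ ^ 2 = 1) (hxy : star x ⬝ᵥ y = 0) (c : ι → ℂ) :
    ‖star x ⬝ᵥ c‖ ^ 2 + ‖star y ⬝ᵥ c‖ ^ 2 ≤ ∑ i, ‖c i‖ ^ 2 := by
  have hon : Orthonormal ℂ ![WithLp.toLp 2 x, WithLp.toLp 2 y] := by
    have norm_eq_one {z : ι → ℂ} (hz : ∑ i, ‖z i‖ ^ 2 = 1) : ‖WithLp.toLp 2 z‖ = 1 :=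
      (pow_eq_one_iff_of_nonneg (norm_nonneg _) two_ne_zero).mp (by
        rwa [EuclideanSpace.norm_sq_eq])
    have hx' := norm_eq_one hx
    have hy' := norm_eq_one hy
    have hyx : inner ℂ (WithLp.toLp 2 x) (WithLp.toLp 2 y) = 0 := by
      rw [EuclideanSpace.inner_toLp_toLp, dotProduct_comm, hxy]
    rw [orthonormal_iff_ite]
    intro i j
    fin_cases i <;> fin_cases j <;>
      simp [hx', hy', hyx, inner_self_eq_norm_sq_to_K, ← inner_conj_symm (WithLp.toLp 2 y)]
  have := hon.sum_inner_products_le (s := Finset.univ) (WithLp.toLp 2 c)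
  simpa [Fin.sum_univ_two, EuclideanSpace.inner_toLp_toLp, dotProduct_comm,
    EuclideanSpace.norm_sq_eq] using this

theorem exists_eq_ofReal_smul_of_ne_zero {x : ι → ℂ} (hx : x ≠ 0) :
    ∃ (a : ℝ) (p : ι → ℂ), 0 < a ∧ ∑ i, ‖p i‖ ^ 2 = 1 ∧ x = (a : ℂ) • p := by
  set a := ‖WithLp.toLp 2 x‖
  have ha : 0 < a := norm_pos_iff.mpr (by simpa using hx)
  refine ⟨a, (a : ℂ)⁻¹ • x, ha, ?_, ?_⟩
  · simp only [Pi.smul_apply, smul_eq_mul, norm_mul, mul_pow, ← Finset.mul_sum, norm_inv,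
      Complex.norm_real, Real.norm_eq_abs, abs_of_pos ha, ← EuclideanSpace.norm_sq_eq]
    rw [inv_pow]
    exact inv_mul_cancel₀ (pow_pos ha 2).ne'
  · rw [smul_smul, mul_inv_cancel₀ (by exact_mod_cast ha.ne'), one_smul]

end Vectors

theorem neg_two_mul_re_mul_le (q : ℝ) (z w : ℂ) :
    -(2 * q * (z * w).re) ≤ ‖z‖ ^ 2 + q ^ 2 * ‖w‖ ^ 2 := by
  have hre : -(q * (z * w).re) ≤ |q| * (‖z‖ * ‖w‖) := by
    rw [← norm_mul]
    calc -(q * (z * w).re) ≤ |q * (z * w).re| := neg_le_abs _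
      _ = |q| * |(z * w).re| := abs_mul _ _
      _ ≤ |q| * ‖z * w‖ := by gcongr; exact Complex.abs_re_le_norm _
  nlinarith [sq_nonneg (‖z‖ - |q| * ‖w‖), sq_abs q]

section FrobSq

variable {n : ℕ}

theorem frobSq_smul (c : ℂ) (M : Matrix (Fin n) (Fin n) ℂ) :
    frobSq (c • M) = ‖c‖ ^ 2 * frobSq M := by
  simp only [frobSq, Matrix.smul_apply, smul_eq_mul, norm_mul, mul_pow, Finset.mul_sum]

theorem frobSq_vecMulVec (u v : Fin n → ℂ) :
    frobSq (vecMulVec u v) = (∑ i, ‖u i‖ ^ 2) * ∑ j, ‖v j‖ ^ 2 := by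
  simp only [frobSq, vecMulVec_apply, norm_mul, mul_pow, Finset.sum_mul_sum]

theorem frobSq_conjTranspose (M : Matrix (Fin n) (Fin n) ℂ) : frobSq Mᴴ = frobSq M := by
  simp only [frobSq, conjTranspose_apply, norm_star]
  exact Finset.sum_comm

theorem frobSq_vecMulVec_sub_smul_vecMulVec (a b c d : Fin n → ℂ) (q : ℝ) :
    frobSq (vecMulVec a b - (q : ℂ) • vecMulVec c d) =
      (∑ i, ‖a i‖ ^ 2) * (∑ j, ‖b j‖ ^ 2) + q ^ 2 * ((∑ i, ‖c i‖ ^ 2) * ∑ j, ‖d j‖ ^ 2)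
        - 2 * q * ((a ⬝ᵥ star c) * (b ⬝ᵥ star d)).re := by
  have entry (z w : ℂ) :
      ‖z - q * w‖ ^ 2 = ‖z‖ ^ 2 + q ^ 2 * ‖w‖ ^ 2 - 2 * q * (z * star w).re := by
    rw [Complex.sq_norm, Complex.normSq_sub, map_mul (starRingEnd ℂ), Complex.conj_ofReal,
      mul_left_comm, Complex.re_ofReal_mul, Complex.normSq_mul, Complex.normSq_ofReal,
      Complex.sq_norm, Complex.sq_norm, Complex.star_def]
    ring
  rw [Finset.sum_mul_sum, Finset.sum_mul_sum, dotProduct, dotProduct, Finset.sum_mul_sum,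
    Complex.re_sum, Finset.mul_sum, Finset.mul_sum, ← Finset.sum_add_distrib,
    ← Finset.sum_sub_distrib]
  refine Finset.sum_congr rfl fun i _ => ?_
  rw [Complex.re_sum, Finset.mul_sum, Finset.mul_sum, ← Finset.sum_add_distrib,
    ← Finset.sum_sub_distrib]
  refine Finset.sum_congr rfl fun j _ => ?_
  rw [Matrix.sub_apply, Matrix.smul_apply, vecMulVec_apply, vecMulVec_apply, smul_eq_mul, entry,
    norm_mul, norm_mul, mul_pow, mul_pow, star_mul', Pi.star_apply, Pi.star_apply,
    mul_mul_mul_comm (a i)]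

variable {x y : Fin n → ℂ}

theorem sum_norm_vecMul_sq_add_le (hx : ∑ i, ‖x i‖ ^ 2 = 1) (hy : ∑ i, ‖y i‖ ^ 2 = 1)
    (hxy : star x ⬝ᵥ y = 0) (B : Matrix (Fin n) (Fin n) ℂ) :
    ∑ j, ‖(star x ᵥ* B) j‖ ^ 2 + ∑ j, ‖(star y ᵥ* B) j‖ ^ 2 ≤ frobSq B := by
  rw [← Finset.sum_add_distrib, frobSq, Finset.sum_comm]
  exact Finset.sum_le_sum fun j _ => norm_dotProduct_sq_add_le hx hy hxy (B · j)

theorem sum_norm_mulVec_sq_add_le (hx : ∑ i, ‖x i‖ ^ 2 = 1) (hy : ∑ i, ‖y i‖ ^ 2 = 1)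
    (hxy : star x ⬝ᵥ y = 0) (B : Matrix (Fin n) (Fin n) ℂ) :
    ∑ i, ‖(B *ᵥ x) i‖ ^ 2 + ∑ i, ‖(B *ᵥ y) i‖ ^ 2 ≤ frobSq B := by
  have := sum_norm_vecMul_sq_add_le hx hy hxy Bᴴ
  simpa only [← star_mulVec, Pi.star_apply, norm_star, frobSq_conjTranspose] using this

theorem frobSq_vecMulVec_mul_sub_smul_mul_vecMulVec_le {p s : Fin n → ℂ}
    (hp : ∑ i, ‖p i‖ ^ 2 = 1) (hs : ∑ i, ‖s i‖ ^ 2 = 1) (hps : p ⬝ᵥ s = 0) (q : ℝ)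
    (B : Matrix (Fin n) (Fin n) ℂ) :
    frobSq (vecMulVec p s * B - (q : ℂ) • (B * vecMulVec p s)) ≤ (1 + q ^ 2) * frobSq B := by
  have hs' : ∑ i, ‖star s i‖ ^ 2 = 1 := by simpa only [Pi.star_apply, norm_star] using hs
  have horth : star p ⬝ᵥ star s = 0 := by
    rw [star_dotProduct_star, dotProduct_comm, hps, star_zero]
  have hcols := sum_norm_vecMul_sq_add_le hp hs' horth B
  have hrows := sum_norm_mulVec_sq_add_le hp hs' horth B
  rw [star_star] at hcols
  have hS : ‖p ⬝ᵥ star (B *ᵥ p)‖ ^ 2 ≤ ∑ j, ‖(star p ᵥ* B) j‖ ^ 2 := by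
    have := norm_dotProduct_sq_le (star p ᵥ* B) p
    rw [hp, mul_one] at this
    rwa [← norm_star, ← star_dotProduct_star, star_star, dotProduct_comm, dotProduct_mulVec]
  have hT : ‖(s ᵥ* B) ⬝ᵥ star s‖ ^ 2 ≤ ∑ i, ‖(B *ᵥ star s) i‖ ^ 2 := by
    have := norm_dotProduct_sq_le s (B *ᵥ star s)
    rwa [hs, one_mul, dotProduct_mulVec] at this
  have hcross := neg_two_mul_re_mul_le q (p ⬝ᵥ star (B *ᵥ p)) ((s ᵥ* B) ⬝ᵥ star s)
  rw [vecMulVec_mul, mul_vecMulVec, frobSq_vecMulVec_sub_smul_vecMulVec, hp, hs, one_mul, mul_one]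
  nlinarith [sq_nonneg q]

end FrobSq

theorem stmt_17 {n : ℕ} (A : Matrix (Fin n) (Fin n) ℂ)
    (hA : A.trace = 0) (hrk : A.rank = 1) (q : ℝ) :
    ∀ B : Matrix (Fin n) (Fin n) ℂ,
      frobSq (A * B - (q : ℂ) • (B * A)) ≤ (1 + q ^ 2) * frobSq A * frobSq B := by
  intro B
  obtain ⟨u, v, rfl⟩ := exists_eq_vecMulVec_of_rank_eq_one hrk
  have hu : u ≠ 0 := by rintro rfl; simp at hrk
  have hv : v ≠ 0 := by rintro rfl; simp at hrk
  obtain ⟨a, p, ha, hp, rfl⟩ := exists_eq_ofReal_smul_of_ne_zero hu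
  obtain ⟨b, s, hb, hs, rfl⟩ := exists_eq_ofReal_smul_of_ne_zero hv
  have hA' : vecMulVec ((a : ℂ) • p) ((b : ℂ) • s) = ((a * b : ℝ) : ℂ) • vecMulVec p s := by
    rw [smul_vecMulVec, vecMulVec_smul, smul_smul, Complex.ofReal_mul]
  have hps : p ⬝ᵥ s = 0 := by
    rw [hA', trace_smul, trace_vecMulVec, smul_eq_mul] at hA
    simpa [ha.ne', hb.ne'] using hA
  rw [hA', smul_mul, mul_smul_comm, smul_comm (q : ℂ), ← smul_sub, frobSq_smul, frobSq_smul,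
    frobSq_vecMulVec, hp, hs]
  calc _ ≤ ‖((a * b : ℝ) : ℂ)‖ ^ 2 * ((1 + q ^ 2) * frobSq B) := by
        gcongr
        exact frobSq_vecMulVec_mul_sub_smul_mul_vecMulVec_le hp hs hps q B
    _ = _ := by ring
end
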